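/- arXiv:1605.06804 — 2 statements merged into one kernel-verified Lean document; each statement's English description precedes it below -/
import Mathlib

section
/- Every real 4×4 matrix A satisfying AᵀA = I and det A = 1 (i.e., every element of SO(4)) can be written as a product A = A₁(a,b,c,d)·A₂(p,q,r,s), where a,b,c,d,p,q,r,s are real numbers with a²+b²+c²+d² = 1 and p²+q²+r²+s² = 1 (the isoclinic representation of van Elfrikhof). -/
/-!
Identify `ℝ⁴` with the quaternions `ℍ`: then `A₁ a b c d` is left multiplication by
`a + b i + c j + d k` and `A₂ p q r s` is right multiplication by `p + q i + r j + s k`.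
The reflection in the hyperplane orthogonal to a unit quaternion `u` is `x ↦ -u x̄ u`, so by the
Cartan–Dieudonné theorem every orthogonal map of `ℍ` is either `x ↦ a x p` or `x ↦ a x̄ p` with
`‖a‖ = ‖p‖ = 1`. Maps of the second kind have determinant `-1`.
-/

open Matrix

/-- The first isoclinic factor: the 4×4 matrix with rows
(a,−b,−c,−d), (b,a,−d,c), (c,d,a,−b), (d,−c,b,a). -/
def A₁ (a b c d : ℝ) : Matrix (Fin 4) (Fin 4) ℝ :=
  !![a, -b, -c, -d;
     b,  a, -d,  c;
     c,  d,  a, -b;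
     d, -c,  b,  a]

/-- The second isoclinic factor: the 4×4 matrix with rows
(p,−q,−r,−s), (q,p,s,−r), (r,−s,p,q), (s,r,−q,p). -/
def A₂ (p q r s : ℝ) : Matrix (Fin 4) (Fin 4) ℝ :=
  !![p, -q, -r, -s;
     q,  p,  s, -r;
     r, -s,  p,  q;
     s,  r, -q,  p]

open Quaternion

local notation "T" => Quaternion.linearIsometryEquivTuple

namespace Quaternion

lemma mul_star_mul_eq_inner_smul_sub (u x : ℍ) :
    u * star x * u = (2 * inner ℝ u x) • u - normSq u • x := by
  ext <;> simp [inner_def, normSq_def'] <;> ring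

lemma reflection_orthogonal_singleton_apply {u : ℍ} (hu : ‖u‖ = 1) (x : ℍ) :
    (ℝ ∙ u)ᗮ.reflection x = -(u * star x * u) := by
  have hu' : normSq u = 1 := by rw [normSq_eq_norm_mul_self, hu, one_mul]
  rw [Submodule.reflection_orthogonal_apply, Submodule.reflection_singleton_apply,
    mul_star_mul_eq_inner_smul_sub, hu, hu']
  simp only [map_one, one_pow, div_one, one_smul]
  module

theorem exists_eq_mul_mul_or_eq_mul_star_mul (φ : ℍ ≃ₗᵢ[ℝ] ℍ) :
    ∃ a p : ℍ, ‖a‖ = 1 ∧ ‖p‖ = 1 ∧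
      ((∀ x, φ x = a * x * p) ∨ ∀ x, φ x = a * star x * p) := by
  obtain ⟨l, -, rfl⟩ := φ.reflections_generate_dim
  induction l with
  | nil => exact ⟨1, 1, norm_one, norm_one, .inl fun x => by simp⟩
  | cons v l ih =>
    obtain ⟨a, p, ha, hp, h⟩ := ih
    rw [List.map_cons, List.prod_cons]
    rcases eq_or_ne v 0 with rfl | hv
    · -- `(ℝ ∙ 0)ᗮ = ⊤`, so this factor is the identity rather than a reflection
      refine ⟨a, p, ha, hp, ?_⟩
      simpa [Submodule.reflection_mem_subspace_eq_self] using h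
    set u := (‖v‖⁻¹ : ℝ) • v
    have hu : ‖u‖ = 1 := norm_smul_inv_norm hv
    have hspan : ℝ ∙ u = ℝ ∙ v := Submodule.span_singleton_smul_eq (by simpa) v
    refine ⟨-(u * star p), star a * u, by simp [hu, hp], by simp [hu, ha], ?_⟩
    simp only [LinearIsometryEquiv.coe_mul, Function.comp_apply, ← hspan,
      reflection_orthogonal_singleton_apply hu]
    rcases h with h | h
    · exact .inr fun x => by simp [h, star_mul, mul_assoc]
    · exact .inl fun x => by simp [h, star_mul, mul_assoc]

lemma re_sq_add_imI_sq_add_imJ_sq_add_imK_sq_eq_one {a : ℍ} (ha : ‖a‖ = 1) :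
    a.re ^ 2 + a.imI ^ 2 + a.imJ ^ 2 + a.imK ^ 2 = 1 := by
  rw [← normSq_def', normSq_eq_norm_mul_self, ha, one_mul]

end Quaternion

lemma toEuclideanCLM_A₁_apply (a x : ℍ) :
    toEuclideanCLM (𝕜 := ℝ) (A₁ a.re a.imI a.imJ a.imK) (T x) = T (a * x) := by
  ext i
  fin_cases i <;> simp [A₁] <;> ring

lemma toEuclideanCLM_A₂_apply (p x : ℍ) :
    toEuclideanCLM (𝕜 := ℝ) (A₂ p.re p.imI p.imJ p.imK) (T x) = T (x * p) := by
  ext i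
  fin_cases i <;> simp [A₂] <;> ring

lemma toEuclideanCLM_diagonal_apply_eq_star (x : ℍ) :
    toEuclideanCLM (𝕜 := ℝ) (diagonal ![1, -1, -1, -1]) (T x) = T (star x) := by
  ext i
  fin_cases i <;> simp [mulVec_diagonal]

lemma det_A₁ (a b c d : ℝ) : (A₁ a b c d).det = (a ^ 2 + b ^ 2 + c ^ 2 + d ^ 2) ^ 2 := by
  simp [A₁, det_succ_row_zero, Fin.sum_univ_succ, Fin.succAbove]
  ring

lemma det_A₂ (p q r s : ℝ) : (A₂ p q r s).det = (p ^ 2 + q ^ 2 + r ^ 2 + s ^ 2) ^ 2 := by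
  simp [A₂, det_succ_row_zero, Fin.sum_univ_succ, Fin.succAbove]
  ring

lemma exists_linearIsometryEquiv_tuple_apply {A : Matrix (Fin 4) (Fin 4) ℝ} (hA : Aᵀ * A = 1) :
    ∃ φ : ℍ ≃ₗᵢ[ℝ] ℍ, ∀ x, T (φ x) = toEuclideanCLM (𝕜 := ℝ) A (T x) :=
  ⟨(T).trans ((Unitary.linearIsometryEquiv ⟨toEuclideanCLM (𝕜 := ℝ) A,
    Unitary.map_mem _ ((mem_orthogonalGroup_iff' _ ℝ).2 hA)⟩).trans (T).symm), fun _ => by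
    rw [LinearIsometryEquiv.trans_apply, LinearIsometryEquiv.trans_apply,
      LinearIsometryEquiv.apply_symm_apply]; rfl⟩

lemma eq_of_forall_toEuclideanCLM_tuple_apply {A B : Matrix (Fin 4) (Fin 4) ℝ}
    (h : ∀ x : ℍ, toEuclideanCLM (𝕜 := ℝ) A (T x) = toEuclideanCLM (𝕜 := ℝ) B (T x)) :
    A = B := by
  refine toEuclideanCLM.injective (ContinuousLinearMap.ext fun v => ?_)
  obtain ⟨x, rfl⟩ := (T).surjective v
  exact h x

/-- Isoclinic (van Elfrikhof) representation: every element of SO(4) is a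
product `A₁(a,b,c,d) * A₂(p,q,r,s)` with `a²+b²+c²+d² = 1` and `p²+q²+r²+s² = 1`. -/
theorem isoclinic_representation (A : Matrix (Fin 4) (Fin 4) ℝ)
    (hO : Aᵀ * A = 1) (hdet : A.det = 1) :
    ∃ a b c d p q r s : ℝ,
      a ^ 2 + b ^ 2 + c ^ 2 + d ^ 2 = 1 ∧
      p ^ 2 + q ^ 2 + r ^ 2 + s ^ 2 = 1 ∧
      A = A₁ a b c d * A₂ p q r s := by
  obtain ⟨φ, hφ⟩ := exists_linearIsometryEquiv_tuple_apply hO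
  obtain ⟨a, p, ha, hp, h | h⟩ := exists_eq_mul_mul_or_eq_mul_star_mul φ
  · refine ⟨_, _, _, _, _, _, _, _, re_sq_add_imI_sq_add_imJ_sq_add_imK_sq_eq_one ha,
      re_sq_add_imI_sq_add_imJ_sq_add_imK_sq_eq_one hp,
      eq_of_forall_toEuclideanCLM_tuple_apply fun x => ?_⟩
    rw [← hφ, h x, _root_.map_mul toEuclideanCLM, mul_apply_eq_comp, toEuclideanCLM_A₂_apply,
      toEuclideanCLM_A₁_apply, mul_assoc]
  · have hodd : A = A₁ a.re a.imI a.imJ a.imK * A₂ p.re p.imI p.imJ p.imK *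
        diagonal ![1, -1, -1, -1] := eq_of_forall_toEuclideanCLM_tuple_apply fun x => by
      rw [← hφ, h x, _root_.map_mul toEuclideanCLM, _root_.map_mul toEuclideanCLM,
        mul_apply_eq_comp, mul_apply_eq_comp, toEuclideanCLM_diagonal_apply_eq_star,
        toEuclideanCLM_A₂_apply, toEuclideanCLM_A₁_apply, mul_assoc]
    have hdet' : A.det = -1 := by
      rw [hodd, det_mul, det_mul, det_A₁, det_A₂, det_diagonal,
        re_sq_add_imI_sq_add_imJ_sq_add_imK_sq_eq_one ha,
        re_sq_add_imI_sq_add_imJ_sq_add_imK_sq_eq_one hp]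
      simp [Fin.prod_univ_four]
    linarith
end

section
/- Let E be a finite-dimensional real inner product space with dim E ≥ 2 and let W be a self-adjoint endomorphism of E such that ⟨Wσ,τ⟩·(⟨Wσ,σ⟩ − ⟨Wτ,τ⟩) = 0 for all σ,τ ∈ E with ‖σ‖ = ‖τ‖ = 1 and ⟨σ,τ⟩ = 0. Then ⟨Wσ,σ⟩ = ⟨Wτ,τ⟩ and ⟨Wσ,τ⟩ = 0 for every such orthonormal pair σ,τ; consequently W is a real scalar multiple of the identity, and if in addition tr W = 0 then W = 0. -/
/-!
For an orthonormal pair `(σ, τ)` put `c = ⟪Wσ, τ⟫` and `d = ⟪Wσ, σ⟫ - ⟪Wτ, τ⟫`, so the hypothesis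
reads `c * d = 0`. Passing to `(cos θ σ + sin θ τ, sin θ σ - cos θ τ)` replaces `(c, d)` by
`(sin 2θ d / 2 - cos 2θ c, cos 2θ d + 2 sin 2θ c)`; as soon as `sin 4θ ≠ 0`, the hypothesis for the
new pair together with `c * d = 0` forces `c = d = 0`. The choice `cos θ = 3/5`, `sin θ = 4/5`
avoids square roots. Once `⟪Wx, y⟫ = 0` whenever `x ⟂ y`, each `Wx` lies in `(xᗮ)ᗮ = ℝ ∙ x`, so
`W` is a homothety `c • id`, whose trace is `c * dim E`.
-/

open scoped RealInnerProductSpace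

theorem eq_zero_and_eq_zero_of_mul_eq_zero_of_rotation {p q c d : ℝ} (hpq : p * q ≠ 0)
    (hpq' : p ^ 2 ≠ q ^ 2) (h : c * d = 0)
    (hrot : (p * q * d + (q ^ 2 - p ^ 2) * c) * ((p ^ 2 - q ^ 2) * d + 4 * p * q * c) = 0) :
    d = 0 ∧ c = 0 := by
  have hsub : p ^ 2 - q ^ 2 ≠ 0 := sub_ne_zero.mpr hpq'
  rcases mul_eq_zero.mp h with rfl | rfl
  · refine ⟨?_, rfl⟩
    have : (p * q * (p ^ 2 - q ^ 2)) * d ^ 2 = 0 := by linear_combination hrot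
    exact pow_eq_zero_iff two_ne_zero |>.mp ((mul_eq_zero.mp this).resolve_left
      (mul_ne_zero hpq hsub))
  · refine ⟨rfl, ?_⟩
    have : (4 * (p * q) * (p ^ 2 - q ^ 2)) * c ^ 2 = 0 := by linear_combination -hrot
    exact pow_eq_zero_iff two_ne_zero |>.mp ((mul_eq_zero.mp this).resolve_left
      (mul_ne_zero (mul_ne_zero four_ne_zero hpq) hsub))

section InnerProductSpace

variable {E : Type*} [NormedAddCommGroup E] [InnerProductSpace ℝ E]

theorem orthonormal_rotation {σ τ : E} (hσ : ‖σ‖ = 1) (hτ : ‖τ‖ = 1) (hστ : ⟪σ, τ⟫ = 0)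
    {p q : ℝ} (hpq : p ^ 2 + q ^ 2 = 1) :
    ‖p • σ + q • τ‖ = 1 ∧ ‖q • σ - p • τ‖ = 1 ∧ ⟪p • σ + q • τ, q • σ - p • τ⟫ = 0 := by
  have hτσ : ⟪τ, σ⟫ = 0 := by rw [real_inner_comm, hστ]
  refine ⟨?_, ?_, ?_⟩
  · rw [← pow_eq_one_iff_of_nonneg (norm_nonneg _) two_ne_zero, norm_add_sq_real, norm_smul,
      norm_smul, real_inner_smul_left, real_inner_smul_right, hσ, hτ, hστ]
    simpa [mul_pow] using hpq
  · rw [← pow_eq_one_iff_of_nonneg (norm_nonneg _) two_ne_zero, norm_sub_sq_real, norm_smul,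
      norm_smul, real_inner_smul_left, real_inner_smul_right, hσ, hτ, hστ]
    simpa [mul_pow, add_comm] using hpq
  · simp only [inner_add_left, inner_sub_right, real_inner_smul_left, real_inner_smul_right,
      real_inner_self_eq_norm_sq, hσ, hτ, hστ, hτσ]
    ring

variable {W : E →ₗ[ℝ] E}

theorem LinearMap.IsSymmetric.inner_apply_rotation (hW : W.IsSymmetric) (σ τ : E) (p q : ℝ) :
    ⟪W (p • σ + q • τ), q • σ - p • τ⟫ =
      p * q * (⟪W σ, σ⟫ - ⟪W τ, τ⟫) + (q ^ 2 - p ^ 2) * ⟪W σ, τ⟫ := by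
  have hτσ : ⟪W τ, σ⟫ = ⟪W σ, τ⟫ := by rw [hW, real_inner_comm]
  simp only [map_add, map_smul, inner_add_left, inner_sub_right, real_inner_smul_left,
    real_inner_smul_right, hτσ]
  ring

theorem LinearMap.IsSymmetric.inner_apply_self_rotation_sub (hW : W.IsSymmetric)
    (σ τ : E) (p q : ℝ) :
    ⟪W (p • σ + q • τ), p • σ + q • τ⟫ - ⟪W (q • σ - p • τ), q • σ - p • τ⟫ =
      (p ^ 2 - q ^ 2) * (⟪W σ, σ⟫ - ⟪W τ, τ⟫) + 4 * p * q * ⟪W σ, τ⟫ := by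
  have hτσ : ⟪W τ, σ⟫ = ⟪W σ, τ⟫ := by rw [hW, real_inner_comm]
  simp only [map_add, map_sub, map_smul, inner_add_left, inner_add_right, inner_sub_left,
    inner_sub_right, real_inner_smul_left, real_inner_smul_right, hτσ]
  ring

theorem LinearMap.IsSymmetric.inner_apply_self_eq_and_inner_apply_eq_zero (hW : W.IsSymmetric)
    (h : ∀ σ τ : E, ‖σ‖ = 1 → ‖τ‖ = 1 → ⟪σ, τ⟫ = 0 →
      ⟪W σ, τ⟫ * (⟪W σ, σ⟫ - ⟪W τ, τ⟫) = 0)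
    {σ τ : E} (hσ : ‖σ‖ = 1) (hτ : ‖τ‖ = 1) (hστ : ⟪σ, τ⟫ = 0) :
    ⟪W σ, σ⟫ = ⟪W τ, τ⟫ ∧ ⟪W σ, τ⟫ = 0 := by
  obtain ⟨hσ', hτ', hστ'⟩ :=
    orthonormal_rotation (p := 3 / 5) (q := 4 / 5) hσ hτ hστ (by norm_num)
  have hrot := h _ _ hσ' hτ' hστ'
  rw [hW.inner_apply_rotation, hW.inner_apply_self_rotation_sub] at hrot
  rw [← sub_eq_zero]
  exact eq_zero_and_eq_zero_of_mul_eq_zero_of_rotation (by norm_num) (by norm_num)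
    (h σ τ hσ hτ hστ) hrot

theorem LinearMap.inner_apply_eq_zero_of_forall_norm_eq_one
    (h : ∀ σ τ : E, ‖σ‖ = 1 → ‖τ‖ = 1 → ⟪σ, τ⟫ = 0 → ⟪W σ, τ⟫ = 0)
    {x y : E} (hxy : ⟪x, y⟫ = 0) : ⟪W x, y⟫ = 0 := by
  rcases eq_or_ne x 0 with rfl | hx
  · simp
  rcases eq_or_ne y 0 with rfl | hy
  · simp
  have := h _ _ (norm_smul_inv_norm hx) (norm_smul_inv_norm hy)
    (by rw [real_inner_smul_left, real_inner_smul_right, hxy, mul_zero, mul_zero])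
  simpa [real_inner_smul_left, real_inner_smul_right, hx, hy] using this

theorem LinearMap.exists_eq_smul_id_of_inner_apply_eq_zero
    (h : ∀ x y : E, ⟪x, y⟫ = 0 → ⟪W x, y⟫ = 0) :
    ∃ c : ℝ, W = c • LinearMap.id := by
  have hspan (x : E) : W x ∈ ℝ ∙ x := by
    rw [← Submodule.orthogonal_orthogonal (ℝ ∙ x)]
    intro y hy
    rw [Submodule.mem_orthogonal_singleton_iff_inner_right] at hy
    rw [real_inner_comm]
    exact h x y hy
  obtain ⟨c, hc⟩ := W.exists_eq_smul_id_of_forall_notLinearIndependent fun x hli => by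
    obtain ⟨a, ha⟩ := Submodule.mem_span_singleton.mp (hspan x)
    have := LinearIndependent.pair_iff.mp hli a (-1) (by rw [ha, neg_one_smul, add_neg_cancel])
    norm_num at this
  exact ⟨c, by rw [hc, Module.End.one_eq_id]⟩

end InnerProductSpace

theorem LinearMap.smul_id_eq_zero_of_trace_eq_zero {K V : Type*} [Field K] [CharZero K]
    [AddCommGroup V] [Module K V] [FiniteDimensional K V] {c : K}
    (h : LinearMap.trace K V (c • LinearMap.id) = 0) : c • (LinearMap.id : V →ₗ[K] V) = 0 := by
  rw [map_smul, LinearMap.trace_id, smul_eq_mul, mul_eq_zero, Nat.cast_eq_zero,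
    Module.finrank_zero_iff] at h
  rcases h with rfl | h
  · exact zero_smul K _
  · exact Subsingleton.elim _ _

theorem selfAdjoint_vanishes_of_quadratic_condition_general
    {E : Type*} [NormedAddCommGroup E] [InnerProductSpace ℝ E]
    [FiniteDimensional ℝ E]
    (W : E →ₗ[ℝ] E) (hW : ∀ x y : E, ⟪W x, y⟫ = ⟪x, W y⟫)
    (h : ∀ σ τ : E, ‖σ‖ = 1 → ‖τ‖ = 1 → ⟪σ, τ⟫ = 0 →
      ⟪W σ, τ⟫ * (⟪W σ, σ⟫ - ⟪W τ, τ⟫) = 0) :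
    (∀ σ τ : E, ‖σ‖ = 1 → ‖τ‖ = 1 → ⟪σ, τ⟫ = 0 →
      ⟪W σ, σ⟫ = ⟪W τ, τ⟫ ∧ ⟪W σ, τ⟫ = 0) ∧
    (∃ c : ℝ, W = c • LinearMap.id) ∧
    (LinearMap.trace ℝ E W = 0 → W = 0) := by
  have hpair : ∀ σ τ : E, ‖σ‖ = 1 → ‖τ‖ = 1 → ⟪σ, τ⟫ = 0 →
      ⟪W σ, σ⟫ = ⟪W τ, τ⟫ ∧ ⟪W σ, τ⟫ = 0 := fun _ _ hσ hτ hστ =>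
    LinearMap.IsSymmetric.inner_apply_self_eq_and_inner_apply_eq_zero hW h hσ hτ hστ
  obtain ⟨c, rfl⟩ := LinearMap.exists_eq_smul_id_of_inner_apply_eq_zero fun _ _ =>
    LinearMap.inner_apply_eq_zero_of_forall_norm_eq_one fun σ τ hσ hτ hστ =>
      (hpair σ τ hσ hτ hστ).2
  exact ⟨hpair, ⟨c, rfl⟩, LinearMap.smul_id_eq_zero_of_trace_eq_zero⟩

/-- If `W` is a self-adjoint endomorphism of a real inner product space `E`
with `dim E ≥ 2` such that `⟨Wσ,τ⟩·(⟨Wσ,σ⟩ − ⟨Wτ,τ⟩) = 0` for every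
orthonormal pair `σ,τ`, then `⟨Wσ,σ⟩ = ⟨Wτ,τ⟩` and `⟨Wσ,τ⟩ = 0` for every such
pair; consequently `W` is a scalar multiple of the identity, and if `tr W = 0`
then `W = 0`. -/
theorem selfAdjoint_vanishes_of_quadratic_condition
    {E : Type*} [NormedAddCommGroup E] [InnerProductSpace ℝ E]
    [FiniteDimensional ℝ E] (hdim : 2 ≤ Module.finrank ℝ E)
    (W : E →ₗ[ℝ] E) (hW : ∀ x y : E, ⟪W x, y⟫ = ⟪x, W y⟫)
    (h : ∀ σ τ : E, ‖σ‖ = 1 → ‖τ‖ = 1 → ⟪σ, τ⟫ = 0 →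
      ⟪W σ, τ⟫ * (⟪W σ, σ⟫ - ⟪W τ, τ⟫) = 0) :
    (∀ σ τ : E, ‖σ‖ = 1 → ‖τ‖ = 1 → ⟪σ, τ⟫ = 0 →
      ⟪W σ, σ⟫ = ⟪W τ, τ⟫ ∧ ⟪W σ, τ⟫ = 0) ∧
    (∃ c : ℝ, W = c • LinearMap.id) ∧
    (LinearMap.trace ℝ E W = 0 → W = 0) :=
  selfAdjoint_vanishes_of_quadratic_condition_general W hW h
end
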